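/- For the lodgepole tree L_n, the number of root ancestral configurations is c(L_n) = 2^{n+1} − 2 and the number of labeled histories is h(L_n) = (2n−1)!! = 1·3·5···(2n−1). -/

import Mathlib

/-- Binary rooted trees (leaf labels abstracted away; leaves are identified
by their positions, encoded as lists of booleans). -/
inductive BTree : Type
  | leaf : BTree
  | node : BTree → BTree → BTree
  deriving DecidableEq

namespace BTree

/-- A position in a binary tree: a path from the root, `false` = left, `true` = right. -/
abbrev Pos := List Bool

/-- The subtree rooted at a position (junk value `leaf` below a leaf). -/
def subtreeAt : BTree → Pos → BTree
  | t, [] => t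
  | leaf, _ :: _ => leaf
  | node l _, false :: p => subtreeAt l p
  | node _ r, true :: p => subtreeAt r p

/-- `p` is a valid position (node) of the tree. -/
def isValidPos : BTree → Pos → Prop
  | _, [] => True
  | leaf, _ :: _ => False
  | node l _, false :: p => isValidPos l p
  | node _ r, true :: p => isValidPos r p

/-- The set of positions of the leaves of a tree. -/
def leafPositions : BTree → Finset Pos
  | leaf => {([] : Pos)}
  | node l r =>
      (leafPositions l).image (false :: ·) ∪ (leafPositions r).image (true :: ·)

/-- The number of leaves of a tree. -/
def numLeaves (t : BTree) : ℕ := (leafPositions t).card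

/-- The set of positions of the internal (non-leaf) nodes of a tree. -/
def internalPos : BTree → Finset Pos
  | leaf => ∅
  | node l r =>
      insert ([] : Pos)
        ((internalPos l).image (false :: ·) ∪ (internalPos r).image (true :: ·))

/-- A root ancestral configuration of `S`: an antichain of non-root nodes of `S`
whose descendant-leaf sets partition the leaf set, i.e. a set of valid non-root
positions such that every leaf position has exactly one weak ancestor in the set. -/
def IsConfig (S : BTree) (A : Finset Pos) : Prop :=
  (∀ p ∈ A, isValidPos S p ∧ p ≠ []) ∧
  ∀ q ∈ leafPositions S, ∃! p, p ∈ A ∧ p <+: q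

/-- The partial order on configurations: `ConfigLE A B` (that is, `A ≺ B`) iff `B`
is obtained from `A` by coalescing some (possibly no) pairs of lineages;
equivalently, every node of `A` is a weak descendant of some node of `B`. -/
def ConfigLE (A B : Finset Pos) : Prop :=
  ∀ p ∈ A, ∃ q ∈ B, q <+: p

/-- The covering relation on root ancestral configurations of `S`. -/
def Covers (S : BTree) (A B : Finset Pos) : Prop :=
  IsConfig S A ∧ IsConfig S B ∧ ConfigLE A B ∧ A ≠ B ∧
  ∀ C, IsConfig S C → ConfigLE A C → ConfigLE C B → C = A ∨ C = B

/-- The maximal root configuration: the two children of the root. -/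
def rootConfig : Finset Pos := {[false], [true]}

/-- The number of root ancestral configurations of `S`. -/
noncomputable def numConfigs (S : BTree) : ℕ := Nat.card {A : Finset Pos // IsConfig S A}

/-- A labeled history of `S`: a linear ordering of the internal nodes of `S`
in which every internal node appears after all of its internal descendants. -/
def IsLabHist (S : BTree) (L : List Pos) : Prop :=
  L.Nodup ∧ (∀ p, p ∈ L ↔ p ∈ internalPos S) ∧
  ∀ i j : Fin L.length, L.get i <+: L.get j → (j : ℕ) ≤ (i : ℕ)

/-- The number of labeled histories of `S`. -/
noncomputable def numHist (S : BTree) : ℕ := Nat.card {L : List Pos // IsLabHist S L}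

/-- The caterpillar tree on `n` leaves (`caterpillar 1` is a single leaf). -/
def caterpillar : ℕ → BTree
  | 0 => leaf
  | 1 => leaf
  | n + 2 => node (caterpillar (n + 1)) leaf

end BTree

open BTree

/-- The lodgepole trees: `L_0` is a single leaf and `L_n` has root subtrees
`L_{n-1}` and a cherry. -/
def lodgepole : ℕ → BTree
  | 0 => BTree.leaf
  | n + 1 => node (lodgepole n) (node BTree.leaf BTree.leaf)

/-!
A root configuration of `node l r` is determined by choosing, independently in each child
subtree, either the child itself or a root configuration of that subtree, so
`c(node l r) = (c(l) + 1) * (c(r) + 1)`; since a cherry has one configuration,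
`c(L_{n+1}) = 2 * c(L_n) + 2`.

In a labeled history of `node T cherry` the root comes last and the internal node of the cherry
is incomparable with the internal nodes of `T`, so deleting it is a bijection onto pairs of a
history of `T` and one of its `|T| + 1` slots. As `L_n` has `2n` internal nodes,
`h(L_{n+1}) = (2n + 1) * h(L_n)`.
-/

theorem List.idxOf_insertIdx_of_notMem {α : Type*} [BEq α] [LawfulBEq α] {l : List α} {a : α}
    (ha : a ∉ l) {i : ℕ} (hi : i ≤ l.length) : (l.insertIdx i a).idxOf a = i := by
  induction l generalizing i with
  | nil => simp_all
  | cons b l ih =>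
    cases i with
    | zero => simp
    | succ i =>
      simp only [List.mem_cons, not_or] at ha
      simp [List.insertIdx_succ_cons, Ne.symm ha.1, ih ha.2 (by simpa using hi)]

theorem List.erase_insertIdx_of_notMem {α : Type*} [BEq α] [LawfulBEq α] {l : List α} {a : α}
    (ha : a ∉ l) {i : ℕ} (hi : i ≤ l.length) : (l.insertIdx i a).erase a = l := by
  rw [← List.eraseIdx_idxOf_eq_erase, List.idxOf_insertIdx_of_notMem ha hi,
    List.eraseIdx_insertIdx_self]

theorem List.insertIdx_idxOf_erase {α : Type*} [BEq α] [LawfulBEq α] {l : List α} {a : α}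
    (ha : a ∈ l) : (l.erase a).insertIdx (l.idxOf a) a = l := by
  have h := List.insertIdx_eraseIdx_getElem (List.idxOf_lt_length_of_mem ha)
  rwa [List.getElem_idxOf, List.eraseIdx_idxOf_eq_erase] at h

theorem List.Pairwise.insertIdx {α : Type*} {R : α → α → Prop} {l : List α} {a : α}
    (hl : l.Pairwise R) (h : ∀ b ∈ l, R a b ∧ R b a) (i : ℕ) : (l.insertIdx i a).Pairwise R := by
  induction l generalizing i with
  | nil => cases i <;> simp
  | cons b l ih =>
    cases i with
    | zero => simp_all [List.pairwise_cons]
    | succ i =>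
      rw [List.insertIdx_succ_cons, List.pairwise_cons]
      refine ⟨fun c hc => ?_, ih (List.pairwise_cons.mp hl).2 (fun c hc => h c (.tail _ hc)) i⟩
      rcases List.eq_or_mem_of_mem_insertIdx hc with rfl | hc
      · exact (h b (.head _)).2
      · exact List.rel_of_pairwise_cons hl hc

namespace BTree

/-- Like `IsConfig`, except that the root may be chosen: `{[]}` is the one extra cut. -/
def IsCut (t : BTree) (A : Finset Pos) : Prop :=
  (∀ p ∈ A, isValidPos t p) ∧ ∀ q ∈ leafPositions t, ∃! p, p ∈ A ∧ p <+: q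

theorem isConfig_iff_isCut {t : BTree} {A : Finset Pos} :
    IsConfig t A ↔ IsCut t A ∧ [] ∉ A := by
  refine ⟨fun ⟨hv, hc⟩ => ⟨⟨fun p hp => (hv p hp).1, hc⟩, fun h => (hv [] h).2 rfl⟩, ?_⟩
  rintro ⟨⟨hv, hc⟩, h0⟩
  exact ⟨fun p hp => ⟨hv p hp, by rintro rfl; exact h0 hp⟩, hc⟩

theorem isValidPos_nil (t : BTree) : isValidPos t [] := by
  cases t <;> trivial

theorem exists_mem_leafPositions_prefix :
    ∀ (t : BTree) (p : Pos), isValidPos t p → ∃ q ∈ leafPositions t, p <+: q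
  | leaf, [], _ => ⟨[], by simp [leafPositions], List.prefix_refl _⟩
  | node l _, [], _ => by
      obtain ⟨q, hq, -⟩ := exists_mem_leafPositions_prefix l [] (isValidPos_nil l)
      exact ⟨false :: q, by simp [leafPositions, hq], List.nil_prefix⟩
  | node l _, false :: p, hp => by
      obtain ⟨q, hq, hpq⟩ := exists_mem_leafPositions_prefix l p hp
      exact ⟨false :: q, by simp [leafPositions, hq], List.cons_prefix_cons.mpr ⟨rfl, hpq⟩⟩
  | node _ r, true :: p, hp => by
      obtain ⟨q, hq, hpq⟩ := exists_mem_leafPositions_prefix r p hp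
      exact ⟨true :: q, by simp [leafPositions, hq], List.cons_prefix_cons.mpr ⟨rfl, hpq⟩⟩

theorem isCut_singleton_nil (t : BTree) : IsCut t {[]} := by
  refine ⟨by simp [isValidPos_nil], fun q _ => ⟨[], by simp, ?_⟩⟩
  simp

theorem IsCut.eq_singleton_nil {t : BTree} {A : Finset Pos} (h : IsCut t A) (h0 : [] ∈ A) :
    A = {[]} := by
  refine Finset.eq_singleton_iff_unique_mem.mpr ⟨h0, fun p hp => ?_⟩
  obtain ⟨q, hq, hpq⟩ := exists_mem_leafPositions_prefix t p (h.1 p hp)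
  exact (h.2 q hq).unique ⟨hp, hpq⟩ ⟨h0, List.nil_prefix⟩

def cutEquivOption (t : BTree) : {A // IsCut t A} ≃ Option {A // IsConfig t A} where
  toFun A := if h : [] ∈ A.1 then none else some ⟨A, isConfig_iff_isCut.mpr ⟨A.2, h⟩⟩
  invFun := Option.elim' ⟨{[]}, isCut_singleton_nil t⟩
    fun A => ⟨A, (isConfig_iff_isCut.mp A.2).1⟩
  left_inv A := by
    by_cases h : [] ∈ A.1
    · simp [Subtype.ext_iff, A.2.eq_singleton_nil h]
    · simp [h]
  right_inv
    | none => by simp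
    | some A => by simp [(isConfig_iff_isCut.mp A.2).2]

instance isEmpty_isConfig_leaf : IsEmpty {A // IsConfig leaf A} := by
  refine ⟨fun ⟨A, hv, hc⟩ => ?_⟩
  obtain ⟨p, ⟨hp, hp0⟩, -⟩ := hc [] (by simp [leafPositions])
  exact (hv p hp).2 (List.prefix_nil.mp hp0)

noncomputable def branch (b : Bool) (A : Finset Pos) : Finset Pos :=
  A.preimage (List.cons b) List.cons_injective.injOn

@[simp]
theorem mem_branch {b : Bool} {A : Finset Pos} {p : Pos} : p ∈ branch b A ↔ b :: p ∈ A :=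
  Finset.mem_preimage

def graft (B C : Finset Pos) : Finset Pos :=
  B.image (List.cons false) ∪ C.image (List.cons true)

@[simp]
theorem nil_notMem_graft (B C : Finset Pos) : [] ∉ graft B C := by
  simp [graft]

@[simp]
theorem branch_false_graft (B C : Finset Pos) : branch false (graft B C) = B := by
  ext; simp [graft]

@[simp]
theorem branch_true_graft (B C : Finset Pos) : branch true (graft B C) = C := by
  ext; simp [graft]

theorem graft_branch {A : Finset Pos} (hA : [] ∉ A) :
    graft (branch false A) (branch true A) = A := by
  ext (_ | ⟨_ | _, p⟩) <;> simp [graft, hA]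

theorem existsUnique_prefix_cons_iff {A : Finset Pos} (hA : [] ∉ A) (b : Bool) (q : Pos) :
    (∃! p, p ∈ A ∧ p <+: b :: q) ↔ ∃! p, b :: p ∈ A ∧ p <+: q := by
  constructor
  · rintro ⟨p, ⟨hp, hpq⟩, huniq⟩
    obtain ⟨c, p, rfl⟩ := List.exists_cons_of_ne_nil (ne_of_mem_of_not_mem hp hA)
    obtain ⟨rfl, hpq'⟩ := List.cons_prefix_cons.mp hpq
    exact ⟨p, ⟨hp, hpq'⟩, fun p' h =>
      List.cons_injective (huniq _ ⟨h.1, List.cons_prefix_cons.mpr ⟨rfl, h.2⟩⟩)⟩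
  · rintro ⟨p, ⟨hp, hpq⟩, huniq⟩
    refine ⟨b :: p, ⟨hp, List.cons_prefix_cons.mpr ⟨rfl, hpq⟩⟩, fun p' ⟨hp', hpq'⟩ => ?_⟩
    obtain ⟨c, p', rfl⟩ := List.exists_cons_of_ne_nil (ne_of_mem_of_not_mem hp' hA)
    obtain ⟨rfl, hpq''⟩ := List.cons_prefix_cons.mp hpq'
    rw [huniq p' ⟨hp', hpq''⟩]

theorem isCut_node_iff {l r : BTree} {A : Finset Pos} (hA : [] ∉ A) :
    IsCut (node l r) A ↔ IsCut l (branch false A) ∧ IsCut r (branch true A) := by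
  have hvalid : (∀ p ∈ A, isValidPos (node l r) p) ↔
      (∀ p ∈ branch false A, isValidPos l p) ∧ ∀ p ∈ branch true A, isValidPos r p := by
    nth_rewrite 1 [← graft_branch hA]
    simp only [graft, Finset.forall_mem_union, Finset.forall_mem_image, mem_branch]
    rfl
  have hleaves : (∀ q ∈ leafPositions (node l r), ∃! p, p ∈ A ∧ p <+: q) ↔
      (∀ q ∈ leafPositions l, ∃! p, p ∈ branch false A ∧ p <+: q) ∧
        ∀ q ∈ leafPositions r, ∃! p, p ∈ branch true A ∧ p <+: q := by
    simp only [leafPositions, Finset.forall_mem_union, Finset.forall_mem_image, mem_branch,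
      existsUnique_prefix_cons_iff hA]
  rw [IsCut, IsCut, IsCut, hvalid, hleaves, and_and_and_comm]

noncomputable def configNodeEquiv (l r : BTree) :
    {A // IsConfig (node l r) A} ≃ {B // IsCut l B} × {C // IsCut r C} where
  toFun A :=
    have hA := isConfig_iff_isCut.mp A.2
    have hcut := (isCut_node_iff hA.2).mp hA.1
    (⟨branch false A, hcut.1⟩, ⟨branch true A, hcut.2⟩)
  invFun BC := ⟨graft BC.1 BC.2, isConfig_iff_isCut.mpr
    ⟨(isCut_node_iff (nil_notMem_graft _ _)).mpr (by simpa using ⟨BC.1.2, BC.2.2⟩),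
      nil_notMem_graft _ _⟩⟩
  left_inv A := Subtype.ext (graft_branch (isConfig_iff_isCut.mp A.2).2)
  right_inv BC := by ext <;> simp

instance finite_isConfig : ∀ t : BTree, Finite {A // IsConfig t A}
  | leaf => inferInstance
  | node l r =>
    have := finite_isConfig l
    have := finite_isConfig r
    have := Finite.of_equiv _ (cutEquivOption l).symm
    have := Finite.of_equiv _ (cutEquivOption r).symm
    .of_equiv _ (configNodeEquiv l r).symm

theorem numConfigs_leaf : numConfigs leaf = 0 :=
  Nat.card_of_isEmpty

theorem card_isCut (t : BTree) : Nat.card {A // IsCut t A} = numConfigs t + 1 := by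
  rw [Nat.card_congr (cutEquivOption t), Finite.card_option, numConfigs]

theorem numConfigs_node (l r : BTree) :
    numConfigs (node l r) = (numConfigs l + 1) * (numConfigs r + 1) := by
  rw [numConfigs, Nat.card_congr (configNodeEquiv l r), Nat.card_prod, card_isCut, card_isCut]

/-- `IsLabHist S` for an arbitrary finite set of nodes in place of `internalPos S`, so that
histories can be built up one node at a time. -/
structure IsLinearExtension (P : Finset Pos) (L : List Pos) : Prop where
  nodup : L.Nodup
  mem_iff (p : Pos) : p ∈ L ↔ p ∈ P
  pairwise : L.Pairwise (fun a b => ¬ a <+: b)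

theorem isLabHist_iff_isLinearExtension {S : BTree} {L : List Pos} :
    IsLabHist S L ↔ IsLinearExtension (internalPos S) L := by
  have hpairwise : (∀ i j : Fin L.length, L.get i <+: L.get j → (j : ℕ) ≤ i) ↔
      L.Pairwise (fun a b => ¬ a <+: b) := by
    rw [List.pairwise_iff_get]
    refine ⟨fun h i j hij hpre => ?_, fun h i j hpre => ?_⟩
    · exact absurd (h i j hpre) (not_le.mpr hij)
    · by_contra! hji
      exact h i j hji hpre
  rw [IsLabHist, hpairwise]
  exact ⟨fun ⟨h₁, h₂, h₃⟩ => ⟨h₁, h₂, h₃⟩, fun ⟨h₁, h₂, h₃⟩ => ⟨h₁, h₂, h₃⟩⟩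

theorem numHist_eq_card_isLinearExtension (S : BTree) :
    numHist S = Nat.card {L // IsLinearExtension (internalPos S) L} :=
  Nat.card_congr (Equiv.subtypeEquivRight fun _ => isLabHist_iff_isLinearExtension)

section LinearExtension

variable {P : Finset Pos} {a : Pos} {L : List Pos}

namespace IsLinearExtension

theorem length_eq (h : IsLinearExtension P L) : L.length = P.card := by
  rw [← List.toFinset_card_of_nodup h.nodup]
  congr
  ext p
  simp [h.mem_iff p]

theorem notMem (h : IsLinearExtension P L) (ha : a ∉ P) : a ∉ L :=
  mt (h.mem_iff a).mp ha

theorem mem_insert_self (h : IsLinearExtension (insert a P) L) : a ∈ L :=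
  (h.mem_iff a).mpr (Finset.mem_insert_self a P)

theorem erase (h : IsLinearExtension (insert a P) L) (ha : a ∉ P) :
    IsLinearExtension P (L.erase a) := by
  refine ⟨h.nodup.erase a, fun p => ?_, h.pairwise.sublist (List.erase_sublist ..)⟩
  rw [h.nodup.mem_erase_iff, h.mem_iff, Finset.mem_insert]
  constructor
  · rintro ⟨hpa, hp | hp⟩
    exacts [absurd hp hpa, hp]
  · exact fun hp => ⟨ne_of_mem_of_not_mem hp ha, .inr hp⟩

theorem of_perm_cons (h : IsLinearExtension P L) (ha : a ∉ P) {L' : List Pos}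
    (hperm : L'.Perm (a :: L)) (hpairwise : L'.Pairwise (fun a b => ¬ a <+: b)) :
    IsLinearExtension (insert a P) L' :=
  ⟨hperm.nodup_iff.mpr (List.nodup_cons.mpr ⟨h.notMem ha, h.nodup⟩),
    fun p => by rw [hperm.mem_iff, List.mem_cons, h.mem_iff, Finset.mem_insert], hpairwise⟩

theorem insertIdx (h : IsLinearExtension P L) (ha : a ∉ P)
    (hinc : ∀ p ∈ P, ¬ a <+: p ∧ ¬ p <+: a) {i : ℕ} (hi : i ≤ L.length) :
    IsLinearExtension (insert a P) (L.insertIdx i a) :=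
  h.of_perm_cons ha (List.perm_insertIdx a L hi)
    (h.pairwise.insertIdx (fun b hb => hinc b ((h.mem_iff b).mp hb)) i)

theorem append_singleton (h : IsLinearExtension P L) (ha : a ∉ P) (hanc : ∀ p ∈ P, a <+: p) :
    IsLinearExtension (insert a P) (L ++ [a]) := by
  refine h.of_perm_cons ha (List.perm_append_singleton a L) (List.pairwise_append.mpr
    ⟨h.pairwise, List.pairwise_singleton _ _, fun p hp _ hq hpa => ?_⟩)
  rw [List.mem_singleton] at hq
  subst hq
  have hp' := (h.mem_iff p).mp hp
  exact ne_of_mem_of_not_mem hp' ha (hpa.eq_of_length_le (hanc p hp').length_le)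

theorem erase_append_singleton (h : IsLinearExtension (insert a P) L)
    (hanc : ∀ p ∈ P, a <+: p) : L.erase a ++ [a] = L := by
  obtain ⟨s, t, rfl⟩ := List.append_of_mem h.mem_insert_self
  have hpw := h.pairwise
  rw [List.pairwise_append, List.pairwise_cons] at hpw
  have ht : t = [] := List.eq_nil_iff_forall_not_mem.mpr fun x hx => by
    refine hpw.2.1.1 x hx ?_
    rcases Finset.mem_insert.mp ((h.mem_iff x).mp (by simp [hx])) with rfl | hx
    exacts [List.prefix_refl _, hanc x hx]
  have has : a ∉ s := fun has =>
    (List.nodup_cons.mp (List.nodup_middle.mp h.nodup)).1 (List.mem_append_left _ has)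
  rw [ht, List.erase_append_right _ has, List.erase_cons_head, List.append_nil]

theorem map_cons_map_tail {b : Bool} (h : IsLinearExtension (P.image (List.cons b)) L) :
    (L.map List.tail).map (List.cons b) = L := by
  rw [List.map_map]
  refine (List.map_congr_left fun p hp => ?_).trans L.map_id
  obtain ⟨q, -, rfl⟩ := Finset.mem_image.mp ((h.mem_iff p).mp hp)
  rfl

end IsLinearExtension

theorem isLinearExtension_map_cons_iff {b : Bool} :
    IsLinearExtension (P.image (List.cons b)) (L.map (List.cons b)) ↔ IsLinearExtension P L := by
  have hmem : (∀ p, p ∈ L.map (List.cons b) ↔ p ∈ P.image (List.cons b)) ↔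
      ∀ p, p ∈ L ↔ p ∈ P :=
    ⟨fun h p => by simpa using h (b :: p), fun h p => by simp [h]⟩
  have hpairwise : (L.map (List.cons b)).Pairwise (fun a b => ¬ a <+: b) ↔
      L.Pairwise (fun a b => ¬ a <+: b) := by
    simp [List.pairwise_map]
  constructor
  · rintro ⟨hnodup, hm, hpw⟩
    exact ⟨(List.nodup_map_iff List.cons_injective).mp hnodup, hmem.mp hm, hpairwise.mp hpw⟩
  · rintro ⟨hnodup, hm, hpw⟩
    exact ⟨hnodup.map List.cons_injective, hmem.mpr hm, hpairwise.mpr hpw⟩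

def insertIdxEquiv (ha : a ∉ P) (hinc : ∀ p ∈ P, ¬ a <+: p ∧ ¬ p <+: a) :
    {L // IsLinearExtension (insert a P) L} ≃ Fin (P.card + 1) × {M // IsLinearExtension P M}
    where
  toFun L := (⟨L.1.idxOf a, by
      rw [← Finset.card_insert_of_notMem ha, ← L.2.length_eq]
      exact List.idxOf_lt_length_of_mem L.2.mem_insert_self⟩,
    ⟨L.1.erase a, L.2.erase ha⟩)
  invFun iM := ⟨iM.2.1.insertIdx iM.1 a,
    iM.2.2.insertIdx ha hinc (iM.1.is_le.trans_eq iM.2.2.length_eq.symm)⟩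
  left_inv L := Subtype.ext (List.insertIdx_idxOf_erase L.2.mem_insert_self)
  right_inv iM := by
    have hi : (iM.1 : ℕ) ≤ iM.2.1.length := iM.1.is_le.trans_eq iM.2.2.length_eq.symm
    ext
    · exact List.idxOf_insertIdx_of_notMem (iM.2.2.notMem ha) hi
    · simp only [List.erase_insertIdx_of_notMem (iM.2.2.notMem ha) hi]

/-- A common ancestor of all of `P` can only come last. -/
def appendSingletonEquiv (ha : a ∉ P) (hanc : ∀ p ∈ P, a <+: p) :
    {L // IsLinearExtension P L} ≃ {L // IsLinearExtension (insert a P) L} where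
  toFun L := ⟨L.1 ++ [a], L.2.append_singleton ha hanc⟩
  invFun L := ⟨L.1.erase a, L.2.erase ha⟩
  left_inv L := by
    ext1
    simp [List.erase_append_right _ (L.2.notMem ha)]
  right_inv L := Subtype.ext (L.2.erase_append_singleton hanc)

def mapConsEquiv (P : Finset Pos) (b : Bool) :
    {L // IsLinearExtension P L} ≃ {L // IsLinearExtension (P.image (List.cons b)) L} where
  toFun L := ⟨L.1.map (List.cons b), isLinearExtension_map_cons_iff.mpr L.2⟩
  invFun L := ⟨L.1.map List.tail,
    isLinearExtension_map_cons_iff.mp ((L.2.map_cons_map_tail).symm ▸ L.2)⟩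
  left_inv L := by ext1; simp [Function.comp_def]
  right_inv L := Subtype.ext L.2.map_cons_map_tail

end LinearExtension

theorem numHist_leaf : numHist leaf = 1 := by
  rw [numHist_eq_card_isLinearExtension, Nat.card_eq_one_iff_unique]
  refine ⟨⟨fun L M => Subtype.ext ?_⟩, ⟨⟨[], ⟨List.nodup_nil, by simp [internalPos], .nil⟩⟩⟩⟩
  rw [List.eq_nil_of_length_eq_zero L.2.length_eq, List.eq_nil_of_length_eq_zero M.2.length_eq]

theorem internalPos_node_cherry (T : BTree) :
    internalPos (node T (node leaf leaf)) =
      insert [] (insert [true] ((internalPos T).image (List.cons false))) := by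
  simp [internalPos]

theorem card_internalPos_node_cherry (T : BTree) :
    (internalPos (node T (node leaf leaf))).card = (internalPos T).card + 2 := by
  rw [internalPos_node_cherry, Finset.card_insert_of_notMem (by simp),
    Finset.card_insert_of_notMem (by simp), Finset.card_image_of_injective _ List.cons_injective]

theorem numHist_node_cherry (T : BTree) :
    numHist (node T (node leaf leaf)) = ((internalPos T).card + 1) * numHist T := by
  rw [numHist_eq_card_isLinearExtension, internalPos_node_cherry,
    ← Nat.card_congr (appendSingletonEquiv (by simp) fun _ _ => List.nil_prefix),
    Nat.card_congr (insertIdxEquiv (by simp) (by simp)), Nat.card_prod, Nat.card_fin,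
    Finset.card_image_of_injective _ List.cons_injective,
    ← Nat.card_congr (mapConsEquiv _ false), numHist_eq_card_isLinearExtension]

end BTree

theorem card_internalPos_lodgepole : ∀ n, (internalPos (lodgepole n)).card = 2 * n
  | 0 => rfl
  | n + 1 => by
    rw [lodgepole, card_internalPos_node_cherry, card_internalPos_lodgepole n]
    ring

theorem numConfigs_lodgepole : ∀ n, numConfigs (lodgepole n) = 2 ^ (n + 1) - 2
  | 0 => numConfigs_leaf
  | n + 1 => by
    have : 2 ≤ 2 ^ (n + 1) := Nat.le_self_pow n.succ_ne_zero 2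
    rw [lodgepole, numConfigs_node, numConfigs_lodgepole n, numConfigs_node, numConfigs_leaf,
      pow_succ 2 (n + 1)]
    omega

theorem numHist_lodgepole : ∀ n, numHist (lodgepole n) = ∏ i ∈ Finset.range n, (2 * i + 1)
  | 0 => numHist_leaf
  | n + 1 => by
    rw [lodgepole, numHist_node_cherry, numHist_lodgepole n, card_internalPos_lodgepole,
      Finset.prod_range_succ, mul_comm]

theorem lodgepole_counts_general (n : ℕ) :
    numConfigs (lodgepole n) = 2 ^ (n + 1) - 2 ∧
    numHist (lodgepole n) = ∏ i ∈ Finset.range n, (2 * i + 1) :=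
  ⟨numConfigs_lodgepole n, numHist_lodgepole n⟩

/-- For the lodgepole tree `L_n`, the number of root ancestral configurations is
`2^{n+1} - 2` and the number of labeled histories is
`(2n-1)!! = 1 * 3 * 5 * ⋯ * (2n-1)`. -/
theorem lodgepole_counts (n : ℕ) (hn : 1 ≤ n) :
    numConfigs (lodgepole n) = 2 ^ (n + 1) - 2 ∧
    numHist (lodgepole n) = ∏ i ∈ Finset.range n, (2 * i + 1) :=
  lodgepole_counts_general n
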